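/- Let G be a finitely generated group with at least 2 ends, with fixed finite symmetric generating set S. Let n ∈ ℕ be such that there exists an n-axial element g_ax ∈ G, write B = B(n,1_G) and B² = B(2n,1_G), let g be a positive power of g_ax such that g^k·B² ∩ B² = ∅ for every integer k ≠ 0, and let m₁ < m₂ be integers. Then there exists a subset 𝔖 ⊆ G such that: (i) g^{k(m₂−m₁)}·𝔖 ∩ 𝔖 = ∅ for every integer k ≠ 0; (ii) for every h ∈ G there exists an integer k such that h ∈ g^{k(m₂−m₁)}·𝔖; (iii) for every h ∈ G there exists an integer k such that g^{k(m₂−m₁)}·h·B ⊆ 𝔖 ∪ g^{m₁}·B² ∪ g^{m₂}·B²; and (iv) g^{m₁}·B ⊆ 𝔖. -/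

import Mathlib

open scoped Pointwise

/-- The Cayley graph of a group with respect to a (symmetric) set `S`:
`g` and `g'` are adjacent when they differ by right multiplication by an element of `S`. -/
def cayley {G : Type*} [Group G] (S : Set G) : SimpleGraph G :=
  SimpleGraph.fromRel (fun g g' => g⁻¹ * g' ∈ S)

/-- `x` and `y` are joined by a walk of `Γ` avoiding the vertex set `K`, i.e. they are in the
same connected component of the graph obtained from `Γ` by deleting the vertices of `K` and
all incident edges. -/
def ReachAvoid {V : Type*} (Γ : SimpleGraph V) (K : Set V) (x y : V) : Prop :=
  ∃ w : Γ.Walk x y, ∀ v ∈ w.support, v ∉ K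

/-- `Separates S B₁ B₀ B₂` : `B₁` separates `B₀` from `B₂`, i.e. `B₀` and `B₂` lie in distinct
connected components of the graph obtained from the Cayley graph of `(G,S)` by deleting the
vertices of `B₁` and all incident edges. -/
def Separates {G : Type*} [Group G] (S : Set G) (B₁ B₀ B₂ : Set G) : Prop :=
  Disjoint B₀ B₁ ∧ Disjoint B₂ B₁ ∧
    ∀ x ∈ B₀, ∀ y ∈ B₂, ¬ ReachAvoid (cayley S) B₁ x y

/-- The closed ball of radius `n` about `g` in the word metric induced by `S`. -/
def ball {G : Type*} [Group G] (S : Set G) (n : ℕ) (g : G) : Set G :=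
  {x : G | (cayley S).dist g x ≤ n}

/-- `G` has at least two ends (with respect to the generating set `S`): for some `n`,
deleting the ball of radius `n` about the identity from the Cayley graph leaves at least
two distinct unbounded (infinite) connected components. -/
def TwoEnds {G : Type*} [Group G] (S : Set G) : Prop :=
  ∃ n : ℕ, ∃ C₁ C₂ : ((cayley S).induce (ball S n 1)ᶜ).ConnectedComponent,
    C₁ ≠ C₂ ∧ C₁.supp.Infinite ∧ C₂.supp.Infinite

/-- `g` is `n`-axial: for all integers `a < b < c`, the translate `g^b • B(n,1)` separates
`g^a • B(n,1)` from `g^c • B(n,1)`. -/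
def IsAxial {G : Type*} [Group G] (S : Set G) (n : ℕ) (g : G) : Prop :=
  ∀ a b c : ℤ, a < b → b < c →
    Separates S (g ^ b • ball S n 1) (g ^ a • ball S n 1) (g ^ c • ball S n 1)

/-
The translates `C k = g ^ (m + k d) • B` of the ball are pairwise disjoint, and by axiality each
separates the earlier ones from the later ones. Call `x` left of `C k` if it lies off `C k` and
cannot reach any `g ^ c • B` with `c > m + k d` without crossing `C k`. This is monotone in `k`,
shifts by one under left multiplication by `g ^ d`, holds for large `k` and fails for small `k`
(a path from `1` to `x` meets only finitely many cuts). Hence every `x` has a unique threshold `k`: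
left of `C (k + 1)` but not of `C k`, and the `g ^ d`-translates of 𝔖 = {threshold 0} tile `G`.
A point of `x • B` outside the `2n`-balls about `g ^ m` and `g ^ (m + d)` is joined to `x` by a
geodesic missing `C 0` and `C 1`, so it has the same threshold as `x`.
-/
open SimpleGraph (Walk Adj.reachable fromRel_adj dist_le)

section CayleyGraph

variable {G : Type*} [Group G] {S : Set G}

lemma cayley_adj_mul_left (h : G) {a b : G} (hab : (cayley S).Adj a b) :
    (cayley S).Adj (h * a) (h * b) := by
  rw [cayley, fromRel_adj] at hab ⊢
  obtain ⟨hne, hs⟩ := hab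
  exact ⟨by simpa using hne, by simpa [mul_assoc] using hs⟩

def cayleyMulLeft (S : Set G) (h : G) : cayley S →g cayley S where
  toFun x := h * x
  map_rel' := cayley_adj_mul_left h

lemma cayley_reachable_mul_right {s : G} (hs : s ∈ S) (x : G) :
    (cayley S).Reachable x (x * s) := by
  by_cases hs1 : s = 1
  · simp [hs1]
  · refine Adj.reachable ?_
    rw [cayley, fromRel_adj]
    exact ⟨by simpa using hs1, Or.inl (by simpa using hs)⟩

lemma cayley_connected (hgen : Subgroup.closure S = ⊤) : (cayley S).Connected := by
  have hfrom1 (x : G) : (cayley S).Reachable 1 x := by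
    induction (hgen ▸ Subgroup.mem_top x : x ∈ Subgroup.closure S)
      using Subgroup.closure_induction_right with
    | one => rfl
    | mul_right x _ s hs hx => exact hx.trans (cayley_reachable_mul_right hs x)
    | mul_inv_cancel x _ s hs hx =>
      exact hx.trans (by simpa using (cayley_reachable_mul_right hs (x * s⁻¹)).symm)
  have : Nonempty G := ⟨1⟩
  exact ⟨fun a b => (hfrom1 a).symm.trans (hfrom1 b)⟩

lemma cayley_dist_mul_left (hconn : (cayley S).Connected) (h a b : G) :
    (cayley S).dist (h * a) (h * b) = (cayley S).dist a b := by
  have hle (h a b : G) : (cayley S).dist (h * a) (h * b) ≤ (cayley S).dist a b := by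
    obtain ⟨w, hw⟩ := hconn.exists_walk_length_eq_dist a b
    have := dist_le (w.map (cayleyMulLeft S h))
    rwa [Walk.length_map, hw] at this
  refine (hle h a b).antisymm ?_
  simpa using hle h⁻¹ (h * a) (h * b)

lemma one_mem_ball (n : ℕ) : (1 : G) ∈ ball S n 1 := by
  simp [ball]

lemma mem_smul_ball (hconn : (cayley S).Connected) {n : ℕ} {h y : G} :
    y ∈ h • ball S n 1 ↔ (cayley S).dist h y ≤ n := by
  rw [Set.mem_smul_set_iff_inv_smul_mem, smul_eq_mul, ball, Set.mem_ofPred_eq,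
    ← cayley_dist_mul_left hconn h, mul_one, mul_inv_cancel_left]

lemma ReachAvoid.mul_left (h : G) {K : Set G} {x y : G} (hr : ReachAvoid (cayley S) K x y) :
    ReachAvoid (cayley S) (h • K) (h * x) (h * y) := by
  obtain ⟨w, hw⟩ := hr
  refine ⟨w.map (cayleyMulLeft S h), fun v hv hvK => ?_⟩
  have hv' : v ∈ (w.map (cayleyMulLeft S h)).support := hv
  rw [Walk.support_map, List.mem_map] at hv'
  obtain ⟨u, hu, rfl⟩ := hv'
  exact hw u hu (Set.smul_mem_smul_set_iff.mp hvK)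

lemma reachAvoid_of_dist_le (hconn : (cayley S).Connected) {n : ℕ} {a x z : G}
    (hxz : (cayley S).dist x z ≤ n) (hz : z ∉ a • ball S (2 * n) 1) :
    ReachAvoid (cayley S) (a • ball S n 1) x z := by
  classical
  obtain ⟨w, hw⟩ := hconn.exists_walk_length_eq_dist x z
  refine ⟨w, fun v hv hva => hz ?_⟩
  have hvz : (cayley S).dist v z ≤ n :=
    ((dist_le _).trans (w.length_dropUntil_le_length hv)).trans (hw ▸ hxz)
  rw [mem_smul_ball hconn] at hva ⊢
  have := hconn.dist_triangle (u := a) (v := v) (w := z)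
  omega

end CayleyGraph

section ReachAvoid

variable {V : Type*} {Γ : SimpleGraph V} {K : Set V} {x y z : V}

lemma ReachAvoid.refl (hx : x ∉ K) : ReachAvoid Γ K x x :=
  ⟨Walk.nil, by simpa using hx⟩

lemma ReachAvoid.symm (h : ReachAvoid Γ K x y) : ReachAvoid Γ K y x := by
  obtain ⟨w, hw⟩ := h
  exact ⟨w.reverse, fun v hv => hw v (by simpa using hv)⟩

lemma ReachAvoid.trans (hxy : ReachAvoid Γ K x y) (hyz : ReachAvoid Γ K y z) :
    ReachAvoid Γ K x z := by
  obtain ⟨w, hw⟩ := hxy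
  obtain ⟨w', hw'⟩ := hyz
  refine ⟨w.append w', fun v hv => ?_⟩
  rcases Walk.mem_support_append_iff w w' |>.mp hv with hv | hv
  exacts [hw v hv, hw' v hv]

lemma ReachAvoid.notMem_right (h : ReachAvoid Γ K x y) : y ∉ K := by
  obtain ⟨w, hw⟩ := h
  exact hw y w.end_mem_support

end ReachAvoid

lemma Int.exists_not_and_succ_of_monotone {P : ℤ → Prop} (hP : Monotone P)
    (hpos : ∃ k, P k) (hneg : ∃ k, ¬P k) : ∃ k, ¬P k ∧ P (k + 1) := by
  obtain ⟨b, hb⟩ := hneg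
  have hbdd : ∃ b' : ℤ, ∀ z, P z → b' ≤ z :=
    ⟨b + 1, fun z hz => by by_contra! hzb; exact hb (hP (by omega) hz)⟩
  obtain ⟨k, hk, hleast⟩ := Int.exists_least_of_bdd hbdd hpos
  exact ⟨k - 1, fun hk' => by have := hleast _ hk'; omega, by simpa using hk⟩

lemma Int.eq_of_monotone_of_not_and_succ {P : ℤ → Prop} (hP : Monotone P) {j k : ℤ}
    (hj : ¬P j ∧ P (j + 1)) (hk : ¬P k ∧ P (k + 1)) : j = k := by
  by_contra hne
  rcases lt_or_gt_of_ne hne with hlt | hlt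
  exacts [hk.1 (hP (by omega) hj.2), hj.1 (hP (by omega) hk.2)]

lemma IsAxial.pow {G : Type*} [Group G] {S : Set G} {n p : ℕ} {g : G} (hax : IsAxial S n g)
    (hp : 0 < p) : IsAxial S n (g ^ p) := by
  intro a b c hab hbc
  have hp' : (0 : ℤ) < p := by exact_mod_cast hp
  simp only [← zpow_natCast, ← zpow_mul]
  exact hax _ _ _ (mul_lt_mul_of_pos_left hab hp') (mul_lt_mul_of_pos_left hbc hp')

namespace AxialCut

variable {G : Type*} [Group G] (S : Set G) (n : ℕ) (g : G) (m d : ℤ)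

def cut (k : ℤ) : Set G := g ^ (m + k * d) • ball S n 1

def LeftOf (k : ℤ) (x : G) : Prop :=
  x ∉ cut S n g m d k ∧
    ∀ c : ℤ, m + k * d < c → ∀ y ∈ ball S n 1,
      ¬ ReachAvoid (cayley S) (cut S n g m d k) x (g ^ c * y)

def domain : Set G := {x | ¬ LeftOf S n g m d 0 x ∧ LeftOf S n g m d 1 x}

variable {S n g m d}

lemma leftOf_monotone (hax : IsAxial S n g) (hd : 0 < d) (x : G) :
    Monotone (LeftOf S n g m d · x) := by
  intro k k' hkk' ⟨hxk, hL⟩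
  rcases hkk'.eq_or_lt with rfl | hlt
  · exact ⟨hxk, hL⟩
  have hb : m + k * d < m + k' * d := by nlinarith
  refine ⟨?_, ?_⟩
  · rintro ⟨y, hy, rfl⟩
    exact hL _ hb y hy (ReachAvoid.refl hxk)
  rintro c hc y hy ⟨w, hw⟩
  by_cases hmeet : ∃ v ∈ w.support, v ∈ cut S n g m d k
  · classical
    obtain ⟨v, hv, hvk⟩ := hmeet
    exact (hax _ _ c hb hc).2.2 v hvk _ ⟨y, hy, rfl⟩
      ⟨w.dropUntil v hv, fun u hu => hw u (w.support_dropUntil_subset_support hv hu)⟩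
  · push Not at hmeet
    exact hL c (hb.trans hc) y hy ⟨w, hmeet⟩

lemma cut_add (j k : ℤ) : cut S n g m d (k + j) = g ^ (j * d) • cut S n g m d k := by
  rw [cut, cut, smul_smul, ← zpow_add]
  ring_nf

lemma LeftOf.zpow_mul {k : ℤ} {x : G} (hL : LeftOf S n g m d k x) (j : ℤ) :
    LeftOf S n g m d (k + j) (g ^ (j * d) * x) := by
  rw [LeftOf, cut_add]
  refine ⟨fun hx => hL.1 (Set.smul_mem_smul_set_iff.mp hx), fun c hc y hy hr => ?_⟩
  have hr' := hr.mul_left (g ^ (j * d))⁻¹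
  rw [inv_smul_smul, inv_mul_cancel_left, ← mul_assoc, ← zpow_neg, ← zpow_add] at hr'
  exact hL.2 _ (by linarith) y hy hr'

lemma leftOf_zpow_mul_iff {k j : ℤ} {x : G} :
    LeftOf S n g m d k (g ^ (j * d) * x) ↔ LeftOf S n g m d (k - j) x := by
  refine ⟨fun hL => ?_, fun hL => by simpa using hL.zpow_mul j⟩
  simpa [← mul_assoc, ← zpow_add, sub_eq_add_neg] using hL.zpow_mul (-j)

lemma mem_zpow_smul_domain {k : ℤ} {x : G} :
    x ∈ g ^ (k * d) • domain S n g m d ↔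
      ¬ LeftOf S n g m d k x ∧ LeftOf S n g m d (k + 1) x := by
  rw [Set.mem_smul_set_iff_inv_smul_mem, smul_eq_mul, ← zpow_neg, ← neg_mul, domain,
    Set.mem_ofPred_eq, leftOf_zpow_mul_iff, leftOf_zpow_mul_iff, zero_sub, neg_neg,
    sub_neg_eq_add, add_comm 1]

lemma disjoint_cut (hax : IsAxial S n g) (hd : 0 < d) {j k : ℤ} (hjk : j < k) :
    Disjoint (cut S n g m d j) (cut S n g m d k) :=
  (hax _ _ (m + k * d + 1) (by nlinarith) (by omega)).1

lemma finite_setOf_exists_mem_cut (hax : IsAxial S n g) (hd : 0 < d) (l : List G) :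
    {k | ∃ v ∈ l, v ∈ cut S n g m d k}.Finite := by
  have hsub (v : G) : {k | v ∈ cut S n g m d k}.Subsingleton := by
    intro j hj k hk
    by_contra hne
    rcases lt_or_gt_of_ne hne with hlt | hlt
    exacts [Set.disjoint_left.mp (disjoint_cut hax hd hlt) hj hk,
      Set.disjoint_left.mp (disjoint_cut hax hd hlt) hk hj]
  refine (l.finite_toSet.biUnion fun v _ => (hsub v).finite).subset ?_
  rintro k ⟨v, hv, hvk⟩
  exact Set.mem_biUnion hv hvk

lemma exists_leftOf (hconn : (cayley S).Connected) (hax : IsAxial S n g) (hd : 0 < d)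
    (x : G) : ∃ k, LeftOf S n g m d k x := by
  obtain ⟨P⟩ := hconn.preconnected 1 x
  obtain ⟨K₀, hK₀⟩ := (finite_setOf_exists_mem_cut (m := m) hax hd P.support).bddAbove
  set K := max (K₀ + 1) (|m| + 1)
  have hK : 0 < m + K * d := by
    have hK₁ : |m| + 1 ≤ K := le_max_right _ _
    have : K ≤ K * d := le_mul_of_one_le_right (by linarith [abs_nonneg m]) hd
    linarith [neg_abs_le m]
  have hP : ReachAvoid (cayley S) (cut S n g m d K) 1 x :=
    ⟨P, fun v hv hvK => by have := hK₀ ⟨v, hv, hvK⟩; omega⟩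
  refine ⟨K, hP.notMem_right, fun c hc y hy hxy => ?_⟩
  exact (hax 0 _ c hK hc).2.2 1 ⟨1, one_mem_ball n, by simp⟩ _ ⟨y, hy, rfl⟩ (hP.trans hxy)

lemma exists_not_leftOf (hconn : (cayley S).Connected) (hax : IsAxial S n g) (hd : 0 < d)
    (x : G) : ∃ k, ¬ LeftOf S n g m d k x := by
  obtain ⟨P⟩ := hconn.preconnected x (g ^ (0 : ℤ) * 1)
  obtain ⟨L₀, hL₀⟩ := (finite_setOf_exists_mem_cut (m := m) hax hd P.support).bddBelow
  set K := min (L₀ - 1) (-|m| - 1)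
  have hK : m + K * d < 0 := by
    have hK₁ : K ≤ -|m| - 1 := min_le_right _ _
    have : K * d ≤ K := mul_le_of_one_le_right (by linarith [abs_nonneg m]) hd
    linarith [le_abs_self m]
  refine ⟨K, fun hL => hL.2 0 hK 1 (one_mem_ball n) ⟨P, fun v hv hvK => ?_⟩⟩
  have := hL₀ ⟨v, hv, hvK⟩
  omega

lemma leftOf_iff_of_reachAvoid {k : ℤ} {x z : G}
    (h : ReachAvoid (cayley S) (cut S n g m d k) x z) :
    LeftOf S n g m d k x ↔ LeftOf S n g m d k z :=
  ⟨fun hL => ⟨h.notMem_right, fun c hc y hy hz => hL.2 c hc y hy (h.trans hz)⟩,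
    fun hL => ⟨h.symm.notMem_right, fun c hc y hy hx => hL.2 c hc y hy (h.symm.trans hx)⟩⟩

lemma leftOf_succ_of_mem_cut (hax : IsAxial S n g) (hd : 0 < d) {k : ℤ} {x : G}
    (hx : x ∈ cut S n g m d k) : LeftOf S n g m d (k + 1) x := by
  refine ⟨Set.disjoint_left.mp (disjoint_cut hax hd (lt_add_one k)) hx, fun c hc y hy => ?_⟩
  exact (hax _ _ c (by nlinarith) hc).2.2 x hx _ ⟨y, hy, rfl⟩

lemma cut_zero_subset_domain (hax : IsAxial S n g) (hd : 0 < d) :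
    g ^ m • ball S n 1 ⊆ domain S n g m d := by
  intro x hx
  have hx₀ : x ∈ cut S n g m d 0 := by simpa [cut] using hx
  exact ⟨fun hL => hL.1 hx₀, by simpa using leftOf_succ_of_mem_cut hax hd hx₀⟩

lemma smul_ball_subset_domain (hconn : (cayley S).Connected) {x : G}
    (hx : x ∈ domain S n g m d) :
    x • ball S n 1 ⊆
      domain S n g m d ∪ g ^ m • ball S (2 * n) 1 ∪ g ^ (m + d) • ball S (2 * n) 1 := by
  intro z hz
  rw [mem_smul_ball hconn] at hz
  by_cases h₀ : z ∈ g ^ m • ball S (2 * n) 1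
  · exact Or.inl (Or.inr h₀)
  by_cases h₁ : z ∈ g ^ (m + d) • ball S (2 * n) 1
  · exact Or.inr h₁
  have r₀ : ReachAvoid (cayley S) (cut S n g m d 0) x z := by
    simpa [cut] using reachAvoid_of_dist_le hconn hz h₀
  have r₁ : ReachAvoid (cayley S) (cut S n g m d 1) x z := by
    simpa [cut] using reachAvoid_of_dist_le hconn hz h₁
  exact Or.inl (Or.inl
    ⟨mt (leftOf_iff_of_reachAvoid r₀).mpr hx.1, (leftOf_iff_of_reachAvoid r₁).mp hx.2⟩)

end AxialCut

open AxialCut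

theorem stmt8_general {G : Type*} [Group G] (S : Finset G)
    (hgen : Subgroup.closure (S : Set G) = ⊤)
    (n : ℕ) (gax : G) (hax : IsAxial (S : Set G) n gax)
    (g : G) (hgpow : ∃ p : ℕ, 0 < p ∧ g = gax ^ p)
    (m₁ m₂ : ℤ) (hm : m₁ < m₂) :
    ∃ 𝔖 : Set G,
      (∀ k : ℤ, k ≠ 0 → Disjoint (g ^ (k * (m₂ - m₁)) • 𝔖) 𝔖) ∧
      (∀ h : G, ∃ k : ℤ, h ∈ g ^ (k * (m₂ - m₁)) • 𝔖) ∧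
      (∀ h : G, ∃ k : ℤ, (g ^ (k * (m₂ - m₁)) * h) • ball (S : Set G) n 1 ⊆
        𝔖 ∪ g ^ m₁ • ball (S : Set G) (2 * n) 1 ∪ g ^ m₂ • ball (S : Set G) (2 * n) 1) ∧
      g ^ m₁ • ball (S : Set G) n 1 ⊆ 𝔖 := by
  have hconn := cayley_connected hgen
  have hg : IsAxial S n g := by
    obtain ⟨p, hp, rfl⟩ := hgpow
    exact hax.pow hp
  have hd : 0 < m₂ - m₁ := sub_pos.mpr hm
  have hmono := leftOf_monotone (m := m₁) hg hd
  have hcover (h : G) : ∃ k : ℤ, h ∈ g ^ (k * (m₂ - m₁)) • domain S n g m₁ (m₂ - m₁) :=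
    (Int.exists_not_and_succ_of_monotone (hmono h) (exists_leftOf hconn hg hd h)
      (exists_not_leftOf hconn hg hd h)).imp fun _ hk => mem_zpow_smul_domain.mpr hk
  refine ⟨domain S n g m₁ (m₂ - m₁), fun k hk => ?_, hcover, fun h => ?_,
    cut_zero_subset_domain hg hd⟩
  · refine Set.disjoint_left.mpr fun x hxk hx₀ => hk ?_
    have hx₀' : x ∈ g ^ (0 * (m₂ - m₁)) • domain S n g m₁ (m₂ - m₁) := by simpa using hx₀
    exact Int.eq_of_monotone_of_not_and_succ (hmono x) (mem_zpow_smul_domain.mp hxk)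
      (mem_zpow_smul_domain.mp hx₀')
  · obtain ⟨k, hk⟩ := hcover h
    refine ⟨-k, ?_⟩
    rw [Set.mem_smul_set_iff_inv_smul_mem, smul_eq_mul, ← zpow_neg, ← neg_mul] at hk
    simpa using smul_ball_subset_domain hconn hk

/-- existence of a fundamental-domain-like set `𝔖` for the action of
`⟨g^(m₂-m₁)⟩`, where `g` is a suitable positive power of an `n`-axial element.
Here `B = ball S n 1` and `B² = ball S (2n) 1`. -/
theorem stmt8 {G : Type*} [Group G] (S : Finset G)
    (hsym : ∀ s ∈ S, s⁻¹ ∈ S) (hgen : Subgroup.closure (S : Set G) = ⊤)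
    (h2 : TwoEnds (S : Set G)) (n : ℕ) (gax : G) (hax : IsAxial (S : Set G) n gax)
    (g : G) (hgpow : ∃ p : ℕ, 0 < p ∧ g = gax ^ p)
    (hdisj : ∀ k : ℤ, k ≠ 0 →
      Disjoint (g ^ k • ball (S : Set G) (2 * n) 1) (ball (S : Set G) (2 * n) 1))
    (m₁ m₂ : ℤ) (hm : m₁ < m₂) :
    ∃ 𝔖 : Set G,
      (∀ k : ℤ, k ≠ 0 → Disjoint (g ^ (k * (m₂ - m₁)) • 𝔖) 𝔖) ∧
      (∀ h : G, ∃ k : ℤ, h ∈ g ^ (k * (m₂ - m₁)) • 𝔖) ∧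
      (∀ h : G, ∃ k : ℤ, (g ^ (k * (m₂ - m₁)) * h) • ball (S : Set G) n 1 ⊆
        𝔖 ∪ g ^ m₁ • ball (S : Set G) (2 * n) 1 ∪ g ^ m₂ • ball (S : Set G) (2 * n) 1) ∧
      g ^ m₁ • ball (S : Set G) n 1 ⊆ 𝔖 :=
  stmt8_general S hgen n gax hax g hgpow m₁ m₂ hm
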